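/- arXiv:2504.04270 — 5 statements merged into one kernel-verified Lean document; each statement's English description precedes it below -/
import Mathlib

section
/- The functions $f_n$ defined on $\partial A$ by $f_n(z) = \frac{R^n}{\sqrt{1+R^{2n}}} z^n$ for $|z|=1$ and $f_n(z) = \frac{-1}{R^n\sqrt{1+R^{2n}}} z^n$ for $|z|=R$ form an orthonormal family in $L^2(\partial A)$, and each $f_n$ is orthogonal to every $e_m(z) = z^m/\sqrt{1+R^{2m}}$. -/
open MeasureTheory
open scoped ComplexConjugate

noncomputable section

/-- Inner product on `L²(∂A)` for the annulus boundary (circles of radius 1 and `R`). -/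
def ipA (R : ℝ) (f g : ℂ → ℂ) : ℂ :=
  (1/(2*Real.pi)) * (∫ t in (0:ℝ)..(2*Real.pi),
      f (Complex.exp ((t:ℂ) * Complex.I)) * conj (g (Complex.exp ((t:ℂ) * Complex.I))))
  + (1/(2*Real.pi)) * (∫ t in (0:ℝ)..(2*Real.pi),
      f ((R:ℂ) * Complex.exp ((t:ℂ) * Complex.I)) * conj (g ((R:ℂ) * Complex.exp ((t:ℂ) * Complex.I))))

/-- The orthonormal family `e_n(z) = z^n / √(1+R^{2n})`. -/
def eA (R : ℝ) (n : ℤ) (z : ℂ) : ℂ := z ^ n / (Real.sqrt (1 + R ^ (2*n)) : ℂ)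

/-- The orthonormal family `f_n` spanning the complement of `H²(∂A)` in `L²(∂A)`. -/
def fA (R : ℝ) (n : ℤ) (z : ℂ) : ℂ :=
  if ‖z‖ = 1 then ((R ^ n / Real.sqrt (1 + R ^ (2*n)) : ℝ) : ℂ) * z ^ n
  else (((-1) / (R ^ n * Real.sqrt (1 + R ^ (2*n))) : ℝ) : ℂ) * z ^ n

/-- `n`-th Fourier coefficient of `f` on the outer circle `C = {|z| = 1}`. -/
def fcC (f : ℂ → ℂ) (n : ℤ) : ℂ :=
  (1/(2*Real.pi)) * ∫ t in (0:ℝ)..(2*Real.pi),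
    f (Complex.exp ((t:ℂ) * Complex.I)) * Complex.exp (-((n:ℂ) * (t:ℂ)) * Complex.I)

/-- `n`-th Fourier coefficient of `f` on the inner circle `C₀ = {|z| = R}`. -/
def fcC0 (R : ℝ) (f : ℂ → ℂ) (n : ℤ) : ℂ :=
  (1/(2*Real.pi)) * ∫ t in (0:ℝ)..(2*Real.pi),
    f ((R:ℂ) * Complex.exp ((t:ℂ) * Complex.I)) * Complex.exp (-((n:ℂ) * (t:ℂ)) * Complex.I)

/-- The boundary measure `σ` on `∂A` (normalized arc length on the two circles). -/
def muA (R : ℝ) : Measure ℂ :=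
  (ENNReal.ofReal (1/(2*Real.pi))) •
    ((volume.restrict (Set.Ioc (0:ℝ) (2*Real.pi))).map
        (fun t : ℝ => Complex.exp ((t:ℂ) * Complex.I))
      + (volume.restrict (Set.Ioc (0:ℝ) (2*Real.pi))).map
        (fun t : ℝ => (R:ℂ) * Complex.exp ((t:ℂ) * Complex.I)))

/-- The annulus `A_{1,R} = {R < |z| < 1}`. -/
def annulusA (R : ℝ) : Set ℂ := {z : ℂ | R < ‖z‖ ∧ ‖z‖ < 1}

/-- Bergman-space inner product `⟨f,g⟩ = (1/2π) ∫_A f ḡ dA`. -/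
def ipB (R : ℝ) (f g : ℂ → ℂ) : ℂ :=
  (1/(2*Real.pi)) * ∫ z in annulusA R, f z * conj (g z)

/-- The orthonormal family of the Bergman space of the annulus. -/
def bergB (R : ℝ) (n : ℤ) (z : ℂ) : ℂ :=
  if n = -1 then z⁻¹ / (Real.sqrt (Real.log (1/R)) : ℂ)
  else ((Real.sqrt ((2*((n:ℝ)+1))/(1-R^(2*(n+1)))) : ℝ) : ℂ) * z ^ n

/-- `t_m² = 2(m+1)/(1-R^{2(m+1)})` for `m ≠ -1`, and `t_{-1}² = 1/log(1/R)`. -/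
def tsq (R : ℝ) (m : ℤ) : ℝ :=
  if m = -1 then 1 / Real.log (1/R) else 2*((m:ℝ)+1)/(1-R^(2*(m+1)))

/-- `t_m = √(t_m²)`, the normalizing constants of the Bergman basis `t_m z^m`. -/
def tA (R : ℝ) (m : ℤ) : ℝ := Real.sqrt (tsq R m)

/-- Mellin transform over `[R,1]`: `ĝ(s) = ∫_R^1 g(r) r^{s-1} dr`. -/
def mellinA (R : ℝ) (g : ℝ → ℂ) (s : ℤ) : ℂ :=
  ∫ r in R..(1:ℝ), g r * ((r ^ (s - 1) : ℝ) : ℂ)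

/-- `n`-th Fourier coefficient of a function on the unit circle `𝕋`. -/
def fourierT (f : ℂ → ℂ) (n : ℤ) : ℂ :=
  (1/(2*Real.pi)) * ∫ t in (0:ℝ)..(2*Real.pi),
    f (Complex.exp ((t:ℂ) * Complex.I)) * Complex.exp (-((n:ℂ) * (t:ℂ)) * Complex.I)

/-- Membership in `H^∞ + C` on the unit circle. -/
def HinftyPlusC (phi : ℂ → ℂ) : Prop :=
  ∃ h c : ℂ → ℂ, (∃ C : ℝ, ∀ z, ‖h z‖ ≤ C) ∧ Measurable h ∧
    (∀ n : ℤ, n < 0 → fourierT h n = 0) ∧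
    ContinuousOn c {z : ℂ | ‖z‖ = 1} ∧
    (∀ z : ℂ, ‖z‖ = 1 → phi z = h z + c z)

end


lemma int_exp_aux (k : ℤ) :
    (∫ t in (0:ℝ)..(2*Real.pi), Complex.exp ((k:ℂ)*(t:ℂ)*Complex.I))
      = if k = 0 then ((2*Real.pi:ℝ):ℂ) else 0 := by
  split_ifs with h
  · subst h; simp
  · have hc : (k:ℂ)*Complex.I ≠ 0 := by
      simp [Complex.ext_iff, h]
    have hint := integral_exp_mul_complex (a := 0) (b := 2*Real.pi) hc
    have heq : ∀ t:ℝ, (k:ℂ)*(t:ℂ)*Complex.I = ((k:ℂ)*Complex.I)*(t:ℂ) := by intro t; ring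
    simp only [heq]
    rw [hint]
    have h1 : Complex.exp ((k:ℂ)*Complex.I*((2*Real.pi:ℝ):ℂ)) = 1 := by
      have h2 : (k:ℂ)*Complex.I*((2*Real.pi:ℝ):ℂ) = (k:ℤ) * (2*Real.pi*Complex.I) := by
        push_cast; ring
      rw [h2, Complex.exp_int_mul, Complex.exp_two_pi_mul_I, one_zpow]
    rw [h1]
    simp

lemma int_main_aux (m n : ℤ) (a b : ℂ) :
    (∫ t in (0:ℝ)..(2*Real.pi),
        (a * Complex.exp ((t:ℂ)*Complex.I)^m) * conj (b * Complex.exp ((t:ℂ)*Complex.I)^n))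
      = if m = n then ((2*Real.pi:ℝ):ℂ)*(a*conj b) else 0 := by
  have key : ∀ t:ℝ, (a * Complex.exp ((t:ℂ)*Complex.I)^m) * conj (b * Complex.exp ((t:ℂ)*Complex.I)^n)
      = (a * conj b) * Complex.exp (((m-n:ℤ):ℂ)*(t:ℂ)*Complex.I) := by
    intro t
    have hconj : conj (Complex.exp ((t:ℂ)*Complex.I)^n) = Complex.exp ((t:ℂ)*Complex.I)^(-n) := by
      rw [map_zpow₀, ← Complex.exp_conj]
      simp only [map_mul, Complex.conj_ofReal, Complex.conj_I, mul_neg, Complex.exp_neg]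
      rw [inv_zpow, ← zpow_neg]
    rw [map_mul, hconj]
    have hz : Complex.exp ((t:ℂ)*Complex.I)^m * Complex.exp ((t:ℂ)*Complex.I)^(-n)
        = Complex.exp ((t:ℂ)*Complex.I)^(m-n) := by
      rw [← zpow_add₀ (Complex.exp_ne_zero _)]; ring_nf
    have hz2 : Complex.exp ((t:ℂ)*Complex.I)^(m-n) = Complex.exp (((m-n:ℤ):ℂ)*(t:ℂ)*Complex.I) := by
      rw [mul_assoc, Complex.exp_int_mul]
    calc (a * Complex.exp ((t:ℂ)*Complex.I)^m) * (conj b * Complex.exp ((t:ℂ)*Complex.I)^(-n))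
        = (a * conj b) * (Complex.exp ((t:ℂ)*Complex.I)^m * Complex.exp ((t:ℂ)*Complex.I)^(-n)) := by ring
      _ = _ := by rw [hz, hz2]
  simp only [key]
  rw [intervalIntegral.integral_const_mul, int_exp_aux]
  simp only [sub_eq_zero]
  split_ifs with h <;> ring

theorem stmt1 (R : ℝ) (hR0 : 0 < R) (hR1 : R < 1) :
    (∀ m n : ℤ, ipA R (fA R m) (fA R n) = if m = n then 1 else 0) ∧
    (∀ m n : ℤ, ipA R (fA R n) (eA R m) = 0) := by
  have habs1 : ∀ t:ℝ, ‖Complex.exp ((t:ℂ)*Complex.I)‖ = 1 := by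
    intro t; simp [Complex.norm_exp]
  have habsR : ∀ t:ℝ, ‖(R:ℂ) * Complex.exp ((t:ℂ)*Complex.I)‖ ≠ 1 := by
    intro t
    rw [norm_mul, habs1, mul_one, Complex.norm_real, Real.norm_eq_abs, abs_of_pos hR0]
    exact ne_of_lt hR1
  have hRc : (R:ℂ) ≠ 0 := by exact_mod_cast hR0.ne'
  have hs : ∀ k:ℤ, (0:ℝ) < 1 + R ^ (2*k) := fun k => by positivity
  have hsq : ∀ k:ℤ, Real.sqrt (1 + R ^ (2*k)) * Real.sqrt (1 + R ^ (2*k)) = 1 + R ^ (2*k) :=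
    fun k => Real.mul_self_sqrt (hs k).le
  have hs0 : ∀ k:ℤ, Real.sqrt (1 + R ^ (2*k)) ≠ 0 := fun k => by positivity
  have hRk : ∀ k:ℤ, (R:ℝ)^k ≠ 0 := fun k => zpow_ne_zero k hR0.ne'
  have hR2 : ∀ k:ℤ, R ^ (2*k) = R^k * R^k := by
    intro k; rw [two_mul, zpow_add₀ hR0.ne']
  have hπ : Real.pi ≠ 0 := Real.pi_ne_zero
  have hfO : ∀ (k:ℤ) (t:ℝ), fA R k (Complex.exp ((t:ℂ)*Complex.I))
      = ((R ^ k / Real.sqrt (1 + R ^ (2*k)) : ℝ) : ℂ) * Complex.exp ((t:ℂ)*Complex.I) ^ k := by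
    intro k t; rw [fA, if_pos (habs1 t)]
  have hfI : ∀ (k:ℤ) (t:ℝ), fA R k ((R:ℂ) * Complex.exp ((t:ℂ)*Complex.I))
      = (((((-1) / (R ^ k * Real.sqrt (1 + R ^ (2*k)))) * R^k : ℝ)) : ℂ)
        * Complex.exp ((t:ℂ)*Complex.I) ^ k := by
    intro k t
    rw [fA, if_neg (habsR t), mul_zpow]
    push_cast [Complex.ofReal_zpow]
    ring
  have heO : ∀ (k:ℤ) (t:ℝ), eA R k (Complex.exp ((t:ℂ)*Complex.I))
      = (((1 / Real.sqrt (1 + R ^ (2*k)) : ℝ)) : ℂ) * Complex.exp ((t:ℂ)*Complex.I) ^ k := by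
    intro k t; rw [eA]; push_cast; ring
  have heI : ∀ (k:ℤ) (t:ℝ), eA R k ((R:ℂ) * Complex.exp ((t:ℂ)*Complex.I))
      = ((((1 / Real.sqrt (1 + R ^ (2*k))) * R^k : ℝ)) : ℂ)
        * Complex.exp ((t:ℂ)*Complex.I) ^ k := by
    intro k t; rw [eA, mul_zpow]; push_cast [Complex.ofReal_zpow]; ring
  constructor
  · intro m n
    rw [ipA]
    simp only [hfO, hfI]
    rw [int_main_aux, int_main_aux]
    rcases eq_or_ne m n with h | h
    · subst h
      simp only [if_pos rfl, Complex.conj_ofReal]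
      have hx : (1/(2*Real.pi)) * ((2*Real.pi) *
            ((R ^ m / Real.sqrt (1 + R ^ (2*m))) * (R ^ m / Real.sqrt (1 + R ^ (2*m)))))
          + (1/(2*Real.pi)) * ((2*Real.pi) *
            (((-1) / (R ^ m * Real.sqrt (1 + R ^ (2*m))) * R^m)
              * ((-1) / (R ^ m * Real.sqrt (1 + R ^ (2*m))) * R^m))) = 1 := by
        have h1 := hsq m
        have h2 := hs0 m
        have h3 := hRk m
        rw [hR2 m] at h1 ⊢
        field_simp
        linear_combination (-1:ℝ) * Real.sq_sqrt (by positivity : (0:ℝ) ≤ 1 + (R^m)^2)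
      have hgoal := congrArg (fun x : ℝ => (x:ℂ)) hx
      push_cast at hgoal
      push_cast
      linear_combination hgoal
    · simp [h]
  · intro m n
    rw [ipA]
    simp only [hfO, hfI, heO, heI]
    rw [int_main_aux, int_main_aux]
    rcases eq_or_ne n m with h | h
    · subst h
      simp only [if_pos rfl, Complex.conj_ofReal]
      have hx : (1/(2*Real.pi)) * ((2*Real.pi) *
            ((R ^ n / Real.sqrt (1 + R ^ (2*n))) * (1 / Real.sqrt (1 + R ^ (2*n)))))
          + (1/(2*Real.pi)) * ((2*Real.pi) *
            (((-1) / (R ^ n * Real.sqrt (1 + R ^ (2*n))) * R^n)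
              * ((1 / Real.sqrt (1 + R ^ (2*n))) * R^n))) = 0 := by
        have h2 := hs0 n
        have h3 := hRk n
        field_simp
        linear_combination (0:ℝ) * hsq n
      have hgoal := congrArg (fun x : ℝ => (x:ℂ)) hx
      push_cast at hgoal
      push_cast
      linear_combination hgoal
    · simp [h]
end

section
/- Let $f \in L^\infty(\partial A)$ with Toeplitz matrix entries $a_{j,k} = \frac{1}{\sqrt{1+R^{2j}}\sqrt{1+R^{2k}}}(\widehat{f_C}(j-k) + R^{j+k}\widehat{f_{C_0}}(j-k))$. If there exist two distinct integers $r \neq s$ such that $a_{n,r} = 0$ and $a_{n,s} = 0$ for all $n \in \mathbb{Z}$ (i.e., two columns of the matrix of $T_f$ vanish), then $\widehat{f_C}(n) = \widehat{f_{C_0}}(n) = 0$ for every $n \in \mathbb{Z}$, hence $T_f = 0$. -/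
open MeasureTheory
open scoped ComplexConjugate

theorem stmt3 (R : ℝ) (hR0 : 0 < R) (hR1 : R < 1) (f : ℂ → ℂ)
    (a : ℤ → ℤ → ℂ)
    (ha : ∀ j k : ℤ, a j k
      = (1 / ((Real.sqrt (1 + R ^ (2*j)) : ℂ) * (Real.sqrt (1 + R ^ (2*k)) : ℂ)))
        * (fcC f (j - k) + (R:ℂ) ^ (j + k) * fcC0 R f (j - k)))
    (r s : ℤ) (hrs : r ≠ s)
    (hcr : ∀ n : ℤ, a n r = 0) (hcs : ∀ n : ℤ, a n s = 0) :
    (∀ n : ℤ, fcC f n = 0 ∧ fcC0 R f n = 0) ∧ (∀ j k : ℤ, a j k = 0) := by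
  have hSpos : ∀ j : ℤ, (0:ℝ) < Real.sqrt (1 + R ^ (2*j)) := by
    intro j
    apply Real.sqrt_pos.mpr
    have : (0:ℝ) < R ^ (2*j) := zpow_pos hR0 _
    linarith
  have hS : ∀ j : ℤ, (Real.sqrt (1 + R ^ (2*j)) : ℂ) ≠ 0 := fun j =>
    Complex.ofReal_ne_zero.mpr (ne_of_gt (hSpos j))
  have key : ∀ (c : ℤ), (∀ n, a n c = 0) → ∀ m : ℤ,
      fcC f m + (R:ℂ) ^ (m + 2*c) * fcC0 R f m = 0 := by
    intro c hc m
    have h := hc (m + c)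
    rw [ha] at h
    have hfac : (1 / ((Real.sqrt (1 + R ^ (2*(m+c))) : ℂ)
        * (Real.sqrt (1 + R ^ (2*c)) : ℂ))) ≠ 0 := by
      simp [hS]
    have h2 := (mul_eq_zero.mp h).resolve_left hfac
    rw [show m + c - c = m by ring, show m + c + c = m + 2*c by ring] at h2
    exact h2
  have h1 := key r hcr
  have h2 := key s hcs
  have hC0 : ∀ m : ℤ, fcC0 R f m = 0 := by
    intro m
    have hd : ((R:ℂ) ^ (m + 2*r) - (R:ℂ) ^ (m + 2*s)) * fcC0 R f m = 0 := by
      linear_combination (h1 m) - (h2 m)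
    have hne : (R:ℂ) ^ (m + 2*r) ≠ (R:ℂ) ^ (m + 2*s) := by
      rw [← Complex.ofReal_zpow, ← Complex.ofReal_zpow]
      intro hEq
      have hEq' : R ^ (m + 2*r) = R ^ (m + 2*s) := by exact_mod_cast hEq
      have := zpow_right_injective₀ hR0 (ne_of_lt hR1) hEq'
      omega
    rcases mul_eq_zero.mp hd with h | h
    · exact absurd (sub_eq_zero.mp h) hne
    · exact h
  have hC : ∀ m : ℤ, fcC f m = 0 := by
    intro m
    have := h1 m
    rw [hC0 m] at this
    simpa using this
  refine ⟨fun n => ⟨hC n, hC0 n⟩, fun j k => ?_⟩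
  rw [ha, hC, hC0]
  ring
end

section
/- Let $f, g \in L^\infty(\partial A)$ with $g(re^{i\theta}) = \sum_{k=-\infty}^{N} g_k(r)e^{ik\theta}$ and $f(re^{i\theta}) = \sum_{k=-\infty}^{N'} f_k(r)e^{ik\theta}$ for $r = R, 1$ and integers $N, N'$. If $T_f T_g = 0$ on $H^2(\partial A)$, then $f = 0$ or $g = 0$. -/
open MeasureTheory
open scoped ComplexConjugate

namespace Stmt6Aux

open Complex

lemma conj_exp_I (t : ℝ) :
    (starRingEnd ℂ) (Complex.exp ((t:ℂ) * Complex.I)) = Complex.exp (-((t:ℂ) * Complex.I)) := by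
  rw [← Complex.exp_conj, map_mul, Complex.conj_ofReal, Complex.conj_I]
  ring_nf

lemma sqrt_ne (R : ℝ) (hR0 : 0 < R) (n : ℤ) :
    ((Real.sqrt (1 + R ^ (2*n)) : ℝ) : ℂ) ≠ 0 := by
  have h1 : (0:ℝ) < 1 + R ^ (2*n) := by
    have := zpow_pos hR0 (2*n); linarith
  exact Complex.ofReal_ne_zero.mpr (ne_of_gt (Real.sqrt_pos.mpr h1))

lemma ipA_entry (R : ℝ) (hR0 : 0 < R) (φ : ℂ → ℂ) (j l : ℤ) :
    ipA R (fun z => φ z * eA R l z) (eA R j)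
      = (fcC φ (j - l) + (R:ℂ) ^ (j + l) * fcC0 R φ (j - l))
        / (((Real.sqrt (1 + R ^ (2*l)) : ℝ) : ℂ) * ((Real.sqrt (1 + R ^ (2*j)) : ℝ) : ℂ)) := by
  have hRC : (R:ℂ) ≠ 0 := Complex.ofReal_ne_zero.mpr hR0.ne'
  set a : ℂ := ((Real.sqrt (1 + R ^ (2*l)) : ℝ) : ℂ) with ha
  set bb : ℂ := ((Real.sqrt (1 + R ^ (2*j)) : ℝ) : ℂ) with hbb
  have h1 : ∀ t : ℝ,
      φ (Complex.exp ((t:ℂ) * Complex.I)) * eA R l (Complex.exp ((t:ℂ) * Complex.I))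
        * (starRingEnd ℂ) (eA R j (Complex.exp ((t:ℂ) * Complex.I)))
      = (a*bb)⁻¹ * (φ (Complex.exp ((t:ℂ) * Complex.I))
          * Complex.exp (-((((j-l : ℤ)):ℂ) * (t:ℂ)) * Complex.I)) := by
    intro t
    unfold eA
    rw [map_div₀, map_zpow₀, conj_exp_I, Complex.conj_ofReal]
    rw [← Complex.exp_int_mul, ← Complex.exp_int_mul]
    have he : Complex.exp (-((((j-l : ℤ)):ℂ) * (t:ℂ)) * Complex.I)
        = Complex.exp ((l:ℂ) * ((t:ℂ) * Complex.I)) * Complex.exp ((j:ℂ) * -((t:ℂ) * Complex.I)) := by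
      rw [← Complex.exp_add]; congr 1; push_cast; ring
    rw [he]; ring
  have h2 : ∀ t : ℝ,
      φ ((R:ℂ) * Complex.exp ((t:ℂ) * Complex.I)) * eA R l ((R:ℂ) * Complex.exp ((t:ℂ) * Complex.I))
        * (starRingEnd ℂ) (eA R j ((R:ℂ) * Complex.exp ((t:ℂ) * Complex.I)))
      = ((R:ℂ) ^ (j + l) * (a*bb)⁻¹) * (φ ((R:ℂ) * Complex.exp ((t:ℂ) * Complex.I))
          * Complex.exp (-((((j-l : ℤ)):ℂ) * (t:ℂ)) * Complex.I)) := by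
    intro t
    unfold eA
    rw [map_div₀, map_zpow₀, map_mul, conj_exp_I, Complex.conj_ofReal, Complex.conj_ofReal]
    rw [mul_zpow, mul_zpow]
    rw [← Complex.exp_int_mul, ← Complex.exp_int_mul]
    have he : Complex.exp (-((((j-l : ℤ)):ℂ) * (t:ℂ)) * Complex.I)
        = Complex.exp ((l:ℂ) * ((t:ℂ) * Complex.I)) * Complex.exp ((j:ℂ) * -((t:ℂ) * Complex.I)) := by
      rw [← Complex.exp_add]; congr 1; push_cast; ring
    rw [he, zpow_add₀ hRC]; ring
  have i1 : (∫ t in (0:ℝ)..(2*Real.pi),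
        (fun z => φ z * eA R l z) (Complex.exp ((t:ℂ) * Complex.I))
          * (starRingEnd ℂ) (eA R j (Complex.exp ((t:ℂ) * Complex.I))))
      = (a*bb)⁻¹ * ∫ t in (0:ℝ)..(2*Real.pi),
          φ (Complex.exp ((t:ℂ) * Complex.I))
            * Complex.exp (-((((j-l : ℤ)):ℂ) * (t:ℂ)) * Complex.I) := by
    rw [← intervalIntegral.integral_const_mul]
    exact intervalIntegral.integral_congr fun t _ => h1 t
  have i2 : (∫ t in (0:ℝ)..(2*Real.pi),
        (fun z => φ z * eA R l z) ((R:ℂ) * Complex.exp ((t:ℂ) * Complex.I))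
          * (starRingEnd ℂ) (eA R j ((R:ℂ) * Complex.exp ((t:ℂ) * Complex.I))))
      = ((R:ℂ) ^ (j + l) * (a*bb)⁻¹) * ∫ t in (0:ℝ)..(2*Real.pi),
          φ ((R:ℂ) * Complex.exp ((t:ℂ) * Complex.I))
            * Complex.exp (-((((j-l : ℤ)):ℂ) * (t:ℂ)) * Complex.I) := by
    rw [← intervalIntegral.integral_const_mul]
    exact intervalIntegral.integral_congr fun t _ => h2 t
  show (1/(2*(Real.pi:ℂ))) * _ + (1/(2*(Real.pi:ℂ))) * _ = _
  rw [i1, i2]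
  unfold fcC fcC0
  push_cast
  ring

lemma elim (R : ℝ) (hR0 : 0 < R) (hR1 : R < 1) (α β γ δ : ℂ) (c c' : ℤ)
    (h : ∀ k : ℤ, (γ + (R:ℂ)^(2*k+c') * δ) * (α + (R:ℂ)^(2*k+c) * β) = 0)
    (hne : ¬(α = 0 ∧ β = 0)) : γ = 0 ∧ δ = 0 := by
  have hinj : ∀ p q : ℤ, (R:ℂ)^p = (R:ℂ)^q → p = q := by
    intro p q hpq
    have : (R:ℝ)^p = (R:ℝ)^q := by
      have h1 : ((R^p : ℝ) : ℂ) = ((R^q : ℝ) : ℂ) := by push_cast; exact hpq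
      exact_mod_cast h1
    exact zpow_right_injective₀ hR0 hR1.ne this
  have both : ∀ k1 k2 : ℤ, k1 ≠ k2 → α + (R:ℂ)^(2*k1+c) * β = 0 →
      α + (R:ℂ)^(2*k2+c) * β = 0 → False := by
    intro k1 k2 hk h1 h2
    have hd : ((R:ℂ)^(2*k1+c) - (R:ℂ)^(2*k2+c)) * β = 0 := by linear_combination h1 - h2
    rcases mul_eq_zero.mp hd with hd' | hβ
    · have := hinj _ _ (sub_eq_zero.mp hd')
      omega
    · have hα : α = 0 := by simpa [hβ] using h1
      exact hne ⟨hα, hβ⟩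
  have main : ∀ k1 k2 : ℤ, k1 ≠ k2 → α + (R:ℂ)^(2*k1+c) * β ≠ 0 →
      α + (R:ℂ)^(2*k2+c) * β ≠ 0 → γ = 0 ∧ δ = 0 := by
    intro k1 k2 hk h1 h2
    have e1 : γ + (R:ℂ)^(2*k1+c') * δ = 0 := by
      rcases mul_eq_zero.mp (h k1) with h' | h'
      · exact h'
      · exact absurd h' h1
    have e2 : γ + (R:ℂ)^(2*k2+c') * δ = 0 := by
      rcases mul_eq_zero.mp (h k2) with h' | h'
      · exact h'
      · exact absurd h' h2
    have hd : ((R:ℂ)^(2*k1+c') - (R:ℂ)^(2*k2+c')) * δ = 0 := by linear_combination e1 - e2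
    have hδ : δ = 0 := by
      rcases mul_eq_zero.mp hd with h' | h'
      · exfalso
        have := hinj _ _ (sub_eq_zero.mp h')
        omega
      · exact h'
    have hγ : γ = 0 := by simpa [hδ] using e1
    exact ⟨hγ, hδ⟩
  by_cases hz0 : α + (R:ℂ)^(2*0+c) * β = 0
  · by_cases hz1 : α + (R:ℂ)^(2*1+c) * β = 0
    · exact absurd (both 0 1 (by omega) hz0 hz1) (by simp)
    · by_cases hz2 : α + (R:ℂ)^(2*2+c) * β = 0
      · exact absurd (both 0 2 (by omega) hz0 hz2) (by simp)
      · exact main 1 2 (by omega) hz1 hz2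
  · by_cases hz1 : α + (R:ℂ)^(2*1+c) * β = 0
    · by_cases hz2 : α + (R:ℂ)^(2*2+c) * β = 0
      · exact absurd (both 1 2 (by omega) hz1 hz2) (by simp)
      · exact main 0 2 (by omega) hz0 hz2
    · exact main 0 1 (by omega) hz0 hz1

lemma circ_zero (φ : ℂ → ℂ) (hm : Measurable φ) (hb : ∃ C, ∀ z, ‖φ z‖ ≤ C)
    (hcoeff : ∀ n : ℤ, fcC φ n = 0) :
    ∀ᵐ t : ℝ ∂(volume.restrict (Set.Ioc (0:ℝ) (2*Real.pi))),
      φ (Complex.exp ((t:ℂ) * Complex.I)) = 0 := by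
  haveI : Fact (0 < 2 * Real.pi) := ⟨by positivity⟩
  set T : ℝ := 2 * Real.pi with hT
  have hπ : (2:ℝ) * Real.pi ≠ 0 := by positivity
  let G : AddCircle T → ℂ := fun x => φ ((AddCircle.toCircle x : ℂ))
  have hcont : Continuous fun x : AddCircle T => ((AddCircle.toCircle x : ℂ)) :=
    continuous_subtype_val.comp AddCircle.continuous_toCircle
  have hGm : Measurable G := hm.comp hcont.measurable
  have hpt : ∀ t : ℝ, ((AddCircle.toCircle ((t : ℝ) : AddCircle T) : ℂ))
      = Complex.exp ((t:ℂ) * Complex.I) := by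
    intro t
    have h2 : 2*Real.pi/T*t = t := by rw [hT]; field_simp
    rw [AddCircle.toCircle_apply_mk, Circle.coe_exp, h2]
  have hG2 : MemLp G 2 (AddCircle.haarAddCircle) := by
    obtain ⟨C, hC⟩ := hb
    exact (memLp_top_of_bound hGm.aestronglyMeasurable C
      (Filter.Eventually.of_forall fun x => hC _)).mono_exponent le_top
  have hkey : ∀ n : ℤ, fourierCoeff G n = 0 := by
    intro n
    rw [fourierCoeff_eq_intervalIntegral G n 0]
    have hI : (∫ x in (0:ℝ)..(0 + T), (fourier (-n) (x : AddCircle T) : ℂ) • G (x : AddCircle T))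
        = ∫ t in (0:ℝ)..(2*Real.pi),
            φ (Complex.exp ((t:ℂ) * Complex.I)) * Complex.exp (-((n:ℂ) * (t:ℂ)) * Complex.I) := by
      rw [show (0:ℝ) + T = 2*Real.pi from by rw [hT]; ring]
      apply intervalIntegral.integral_congr
      intro t _
      simp only [smul_eq_mul]
      show (fourier (-n) ((t:ℝ) : AddCircle T) : ℂ)
          * φ ((AddCircle.toCircle ((t:ℝ) : AddCircle T) : ℂ)) = _
      rw [fourier_coe_apply, hpt, mul_comm]
      congr 1
      congr 1
      rw [hT]
      push_cast
      rw [div_eq_iff (mul_ne_zero two_ne_zero (Complex.ofReal_ne_zero.mpr Real.pi_ne_zero))]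
      ring
    have h0 : (∫ t in (0:ℝ)..(2*Real.pi),
        φ (Complex.exp ((t:ℂ) * Complex.I)) * Complex.exp (-((n:ℂ) * (t:ℂ)) * Complex.I)) = 0 := by
      have hthis := hcoeff n
      unfold fcC at hthis
      have hne : (1/(2*(Real.pi:ℂ))) ≠ 0 :=
        one_div_ne_zero (mul_ne_zero two_ne_zero (Complex.ofReal_ne_zero.mpr Real.pi_ne_zero))
      rcases mul_eq_zero.mp hthis with h' | h'
      · exact absurd h' hne
      · exact h'
    rw [hI, h0, smul_zero]
  have hLp : hG2.toLp G = 0 := by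
    apply fourierBasis.repr.injective
    rw [map_zero]
    apply lp.ext
    funext i
    rw [fourierBasis_repr]
    have : fourierCoeff (↑(hG2.toLp G) : AddCircle T → ℂ) i = fourierCoeff G i := by
      unfold fourierCoeff
      apply integral_congr_ae
      filter_upwards [hG2.coeFn_toLp] with x hx
      rw [hx]
    rw [this, hkey]
    rfl
  have hae : ∀ᵐ x ∂(AddCircle.haarAddCircle : Measure (AddCircle T)), G x = 0 := by
    have h1 : G =ᵐ[(AddCircle.haarAddCircle : Measure (AddCircle T))] ↑(hG2.toLp G) :=
      (hG2.coeFn_toLp).symm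
    have h2 : (↑(hG2.toLp G) : AddCircle T → ℂ)
        =ᵐ[(AddCircle.haarAddCircle : Measure (AddCircle T))] 0 := by
      rw [hLp]; exact Lp.coeFn_zero _ _ _
    filter_upwards [h1, h2] with x hx1 hx2
    rw [hx1, hx2]; rfl
  have haev : ∀ᵐ x ∂(volume : Measure (AddCircle T)), G x = 0 := by
    rw [ae_iff] at hae ⊢
    rw [AddCircle.volume_eq_smul_haarAddCircle, Measure.smul_apply, hae, smul_zero]
  have hmp := AddCircle.measurePreserving_mk T 0
  rw [ae_iff] at haev ⊢
  have hms : MeasurableSet {x : AddCircle T | ¬ G x = 0} := by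
    have : {x : AddCircle T | ¬ G x = 0} = G ⁻¹' ({0}ᶜ) := by
      ext x; simp
    rw [this]
    exact hGm (measurableSet_singleton 0).compl
  have := hmp.map_eq
  have hpre : (volume.restrict (Set.Ioc (0:ℝ) (0 + T))) (((↑) : ℝ → AddCircle T) ⁻¹' {x | ¬ G x = 0}) = 0 := by
    rw [← Measure.map_apply (AddCircle.measurable_mk') hms, this]
    exact haev
  have hset : {t : ℝ | ¬ φ (Complex.exp ((t:ℂ) * Complex.I)) = 0}
      = ((↑) : ℝ → AddCircle T) ⁻¹' {x | ¬ G x = 0} := by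
    ext t
    simp only [Set.mem_setOf_eq, Set.mem_preimage]
    constructor
    · intro h h'; exact h (by rw [← hpt t]; exact h')
    · intro h h'; exact h (by show φ _ = 0; rw [hpt t]; exact h')
  rw [show (0:ℝ) + T = 2*Real.pi from by rw [hT]; ring] at hpre
  rw [hset]
  exact hpre

lemma muA_ae (R : ℝ) (φ : ℂ → ℂ) (hm : Measurable φ)
    (h1 : ∀ᵐ t : ℝ ∂(volume.restrict (Set.Ioc (0:ℝ) (2*Real.pi))),
      φ (Complex.exp ((t:ℂ) * Complex.I)) = 0)
    (h2 : ∀ᵐ t : ℝ ∂(volume.restrict (Set.Ioc (0:ℝ) (2*Real.pi))),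
      φ ((R:ℂ) * Complex.exp ((t:ℂ) * Complex.I)) = 0) :
    ∀ᵐ z ∂ muA R, φ z = 0 := by
  have hmexp : Measurable fun t : ℝ => Complex.exp ((t:ℂ) * Complex.I) :=
    Complex.measurable_exp.comp ((Complex.measurable_ofReal).mul_const Complex.I)
  have hmexp2 : Measurable fun t : ℝ => (R:ℂ) * Complex.exp ((t:ℂ) * Complex.I) :=
    hmexp.const_mul _
  rw [ae_iff] at h1 h2 ⊢
  have hms : MeasurableSet {z : ℂ | ¬ φ z = 0} := by
    have : {z : ℂ | ¬ φ z = 0} = φ ⁻¹' ({0}ᶜ) := by ext z; simp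
    rw [this]; exact hm (measurableSet_singleton 0).compl
  unfold muA
  rw [Measure.smul_apply, Measure.add_apply,
    Measure.map_apply hmexp hms, Measure.map_apply hmexp2 hms]
  have e1 : (fun t : ℝ => Complex.exp ((t:ℂ) * Complex.I)) ⁻¹' {z | ¬ φ z = 0}
      = {t : ℝ | ¬ φ (Complex.exp ((t:ℂ) * Complex.I)) = 0} := rfl
  have e2 : (fun t : ℝ => (R:ℂ) * Complex.exp ((t:ℂ) * Complex.I)) ⁻¹' {z | ¬ φ z = 0}
      = {t : ℝ | ¬ φ ((R:ℂ) * Complex.exp ((t:ℂ) * Complex.I)) = 0} := rfl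
  rw [e1, e2, h1, h2]
  simp

lemma ae_zero_of_coeffs (R : ℝ) (hR0 : 0 < R) (φ : ℂ → ℂ) (hm : Measurable φ)
    (hb : ∃ C, ∀ z, ‖φ z‖ ≤ C) (h : ∀ n : ℤ, fcC φ n = 0 ∧ fcC0 R φ n = 0) :
    ∀ᵐ z ∂ muA R, φ z = 0 := by
  apply muA_ae R φ hm
  · exact circ_zero φ hm hb fun n => (h n).1
  · have hm2 : Measurable fun z => φ ((R:ℂ) * z) := hm.comp (measurable_const_mul _)
    have hb2 : ∃ C, ∀ z, ‖φ ((R:ℂ) * z)‖ ≤ C := by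
      obtain ⟨C, hC⟩ := hb; exact ⟨C, fun z => hC _⟩
    have := circ_zero (fun z => φ ((R:ℂ) * z)) hm2 hb2 (fun n => (h n).2)
    exact this

end Stmt6Aux

theorem stmt6 (R : ℝ) (hR0 : 0 < R) (hR1 : R < 1) (f g : ℂ → ℂ)
    (hfm : Measurable f) (hfb : ∃ C : ℝ, ∀ z, ‖f z‖ ≤ C)
    (hgm : Measurable g) (hgb : ∃ C : ℝ, ∀ z, ‖g z‖ ≤ C)
    (N N' : ℤ)
    (hgsupp : ∀ k : ℤ, N < k → fcC g k = 0 ∧ fcC0 R g k = 0)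
    (hfsupp : ∀ k : ℤ, N' < k → fcC f k = 0 ∧ fcC0 R f k = 0)
    {H : Type} [NormedAddCommGroup H] [InnerProductSpace ℂ H] [CompleteSpace H]
    (b : HilbertBasis ℤ ℂ H) (Tf Tg : H →L[ℂ] H)
    (hTf : ∀ j k : ℤ, (inner ℂ (b j) (Tf (b k)) : ℂ)
      = ipA R (fun z => f z * eA R k z) (eA R j))
    (hTg : ∀ j k : ℤ, (inner ℂ (b j) (Tg (b k)) : ℂ)
      = ipA R (fun z => g z * eA R k z) (eA R j))
    (h0 : Tf.comp Tg = 0) :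
    (∀ᵐ z ∂ muA R, f z = 0) ∨ (∀ᵐ z ∂ muA R, g z = 0) := by
  classical
  have entryf : ∀ j l : ℤ, (inner ℂ (b j) (Tf (b l)) : ℂ)
      = (fcC f (j - l) + (R:ℂ) ^ (j + l) * fcC0 R f (j - l))
        / (((Real.sqrt (1 + R ^ (2*l)) : ℝ) : ℂ) * ((Real.sqrt (1 + R ^ (2*j)) : ℝ) : ℂ)) :=
    fun j l => (hTf j l).trans (Stmt6Aux.ipA_entry R hR0 f j l)
  have entryg : ∀ j l : ℤ, (inner ℂ (b j) (Tg (b l)) : ℂ)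
      = (fcC g (j - l) + (R:ℂ) ^ (j + l) * fcC0 R g (j - l))
        / (((Real.sqrt (1 + R ^ (2*l)) : ℝ) : ℂ) * ((Real.sqrt (1 + R ^ (2*j)) : ℝ) : ℂ)) :=
    fun j l => (hTg j l).trans (Stmt6Aux.ipA_entry R hR0 g j l)
  have key : ∀ m n : ℤ,
      (∀ k : ℤ, m < k → fcC f k = 0 ∧ fcC0 R f k = 0) →
      (∀ k : ℤ, n < k → fcC g k = 0 ∧ fcC0 R g k = 0) →
      ∀ k : ℤ,
        (fcC g n + (R:ℂ)^(2*k+n) * fcC0 R g n)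
          * (fcC f m + (R:ℂ)^(2*k+2*n+m) * fcC0 R f m) = 0 := by
    intro m n hfs hgs k
    set j : ℤ := k + n + m with hj
    set l0 : ℤ := k + n with hl0
    set x : H := Tg (b k) with hx
    have hsum : HasSum (fun l => b.repr x l • b l) x := b.hasSum_repr x
    have hsum2 : HasSum (fun l => (innerSL ℂ (b j)) (Tf (b.repr x l • b l)))
        ((innerSL ℂ (b j)) (Tf x)) := (hsum.mapL Tf).mapL (innerSL ℂ (b j))
    have hTfx : Tf x = 0 := by
      have h' := congrArg (fun (T : H →L[ℂ] H) => T (b k)) h0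
      simpa [hx] using h'
    have e1 : ∀ l : ℤ, (innerSL ℂ (b j)) (Tf (b.repr x l • b l))
        = (inner ℂ (b l) x : ℂ) * (inner ℂ (b j) (Tf (b l)) : ℂ) := by
      intro l
      rw [ContinuousLinearMap.map_smul, innerSL_apply_apply, inner_smul_right, b.repr_apply_apply]
    have e2 : (innerSL ℂ (b j)) (Tf x) = 0 := by rw [hTfx]; simp
    rw [e2] at hsum2
    simp only [e1] at hsum2
    have hzero : ∀ l : ℤ, l ≠ l0 →
        (inner ℂ (b l) x : ℂ) * (inner ℂ (b j) (Tf (b l)) : ℂ) = 0 := by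
      intro l hl
      rcases lt_or_gt_of_ne hl with hlt | hgt
      · have hm' : m < j - l := by omega
        rw [entryf j l, (hfs _ hm').1, (hfs _ hm').2]
        simp
      · have hn' : n < l - k := by omega
        rw [hx, entryg l k, (hgs _ hn').1, (hgs _ hn').2]
        simp
    have hfun : (fun l : ℤ => (inner ℂ (b l) x : ℂ) * (inner ℂ (b j) (Tf (b l)) : ℂ))
        = fun l : ℤ => if l = l0 then (inner ℂ (b l0) x : ℂ) * (inner ℂ (b j) (Tf (b l0)) : ℂ)
          else 0 := by
      funext l
      by_cases h' : l = l0
      · rw [if_pos h', h']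
      · rw [if_neg h', hzero l h']
    rw [hfun] at hsum2
    have h00 : (inner ℂ (b l0) x : ℂ) * (inner ℂ (b j) (Tf (b l0)) : ℂ) = 0 :=
      (hasSum_ite_eq l0 _).unique hsum2
    rw [hx, entryg l0 k, entryf j l0] at h00
    have hd1 : l0 - k = n := by omega
    have hd2 : l0 + k = 2*k + n := by omega
    have hd3 : j - l0 = m := by omega
    have hd4 : j + l0 = 2*k + 2*n + m := by omega
    rw [hd1, hd2, hd3, hd4] at h00
    rw [div_mul_div_comm] at h00
    rcases div_eq_zero_iff.mp h00 with h' | h'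
    · exact h'
    · exfalso
      have n1 := Stmt6Aux.sqrt_ne R hR0 k
      have n2 := Stmt6Aux.sqrt_ne R hR0 l0
      have n3 := Stmt6Aux.sqrt_ne R hR0 j
      rcases mul_eq_zero.mp h' with h'' | h'' <;>
        rcases mul_eq_zero.mp h'' with h3 | h3 <;> tauto
  by_cases hf : ∀ n : ℤ, fcC f n = 0 ∧ fcC0 R f n = 0
  · exact Or.inl (Stmt6Aux.ae_zero_of_coeffs R hR0 f hfm hfb hf)
  · right
    obtain ⟨n₁, hn₁⟩ := not_forall.mp hf
    obtain ⟨n₀, hn₀P, hn₀max⟩ := Int.exists_greatest_of_bdd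
      (P := fun n => ¬(fcC f n = 0 ∧ fcC0 R f n = 0))
      ⟨N', fun z hz => by
        by_contra hc
        push_neg at hc
        exact hz (hfsupp z (by omega))⟩
      ⟨n₁, hn₁⟩
    have hfs' : ∀ k : ℤ, n₀ < k → fcC f k = 0 ∧ fcC0 R f k = 0 := by
      intro k hk
      by_contra hc
      exact absurd (hn₀max k fun hc' => hc hc') (by omega)
    have hne : ¬(fcC f n₀ = 0 ∧ fcC0 R f n₀ = 0) := fun hc => hn₀P hc
    have main : ∀ d : ℕ, fcC g (N - d) = 0 ∧ fcC0 R g (N - d) = 0 := by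
      intro d
      induction d using Nat.strong_induction_on with
      | _ d IH =>
        have hgs' : ∀ k : ℤ, N - d < k → fcC g k = 0 ∧ fcC0 R g k = 0 := by
          intro k hk
          by_cases hNk : N < k
          · exact hgsupp k hNk
          · push_neg at hNk
            have hkeq : k = N - ((N - k).toNat : ℤ) := by omega
            rw [hkeq]
            exact IH (N - k).toNat (by omega)
        have hk := key n₀ (N - d) hfs' hgs'
        exact Stmt6Aux.elim R hR0 hR1 (fcC f n₀) (fcC0 R f n₀)
          (fcC g (N - d)) (fcC0 R g (N - d)) (2*(N - d) + n₀) (N - d)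
          (fun k => by
            have := hk k
            have harr : (2:ℤ)*k + 2*(N - d) + n₀ = 2*k + (2*(N - d) + n₀) := by ring
            rw [harr] at this
            exact this) hne
    have hgc : ∀ n : ℤ, fcC g n = 0 ∧ fcC0 R g n = 0 := by
      intro n
      by_cases hn : N < n
      · exact hgsupp n hn
      · push_neg at hn
        have hkeq : n = N - ((N - n).toNat : ℤ) := by omega
        rw [hkeq]
        exact main _
    exact Stmt6Aux.ae_zero_of_coeffs R hR0 g hgm hgb hgc
end

section
/- For every $n \in \mathbb{Z}$, the complex conjugate of the basis function $e_n$ decomposes in $L^2(\partial A)$ as $\overline{e_n} = \frac{2R^n}{1+R^{2n}} e_{-n} + \frac{1-R^{2n}}{1+R^{2n}} f_{-n}$, where $e_n(z) = z^n/\sqrt{1+R^{2n}}$ and $f_n(z) = \frac{R^n}{\sqrt{1+R^{2n}}}z^n$ on $|z|=1$, $f_n(z) = \frac{-1}{R^n\sqrt{1+R^{2n}}}z^n$ on $|z|=R$. -/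
open MeasureTheory
open scoped ComplexConjugate

theorem stmt9 (R : ℝ) (hR0 : 0 < R) (hR1 : R < 1) (n : ℤ) (z : ℂ)
    (hz : ‖z‖ = 1 ∨ ‖z‖ = R) :
    conj (eA R n z)
      = ((2*R^n/(1+R^(2*n)) : ℝ) : ℂ) * eA R (-n) z
        + (((1-R^(2*n))/(1+R^(2*n)) : ℝ) : ℂ) * fA R (-n) z := by
  have hRn : (0:ℝ) < R ^ n := zpow_pos hR0 n
  have h2n : R ^ (2*n) = (R ^ n)^2 := by
    rw [two_mul, zpow_add₀ hR0.ne']; ring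
  have hpos : (0:ℝ) < 1 + R ^ (2*n) := by
    have : (0:ℝ) < R ^ (2*n) := zpow_pos hR0 _
    linarith
  set s : ℝ := Real.sqrt (1 + R ^ (2*n)) with hs
  have hspos : 0 < s := Real.sqrt_pos.mpr hpos
  have hs2 : s ^ 2 = 1 + R ^ (2*n) := Real.sq_sqrt hpos.le
  have hneg : Real.sqrt (1 + R ^ (2*(-n))) = s / R ^ n := by
    have h1 : 1 + R ^ (2*(-n)) = (1 + R ^ (2*n)) / (R^n)^2 := by
      rw [← h2n, mul_neg, zpow_neg]
      field_simp
      ring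
    rw [h1, Real.sqrt_div hpos.le, Real.sqrt_sq hRn.le]
  have hz0 : z ≠ 0 := by
    intro h
    rcases hz with h1 | h1 <;> rw [h, norm_zero] at h1 <;>
      [exact one_ne_zero h1.symm; exact hR0.ne h1]
  have hzn : z ^ n ≠ 0 := zpow_ne_zero _ hz0
  have hRneg : R ^ (-n) = (R ^ n)⁻¹ := zpow_neg R n
  rcases hz with habs | habs
  · have hc : conj z = z⁻¹ := by
      rw [Complex.inv_def, Complex.normSq_eq_norm_sq, habs]
      norm_num
    have L : conj (eA R n z) = ((1/s : ℝ) : ℂ) * (z^n)⁻¹ := by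
      rw [eA, map_div₀, map_zpow₀, hc, Complex.conj_ofReal, inv_zpow]
      push_cast
      ring
    have Rr : ((2*R^n/(1+R^(2*n)) : ℝ) : ℂ) * eA R (-n) z
        + (((1-R^(2*n))/(1+R^(2*n)) : ℝ) : ℂ) * fA R (-n) z
        = (((2*R^n/(1+R^(2*n))) * (R^n/s)
            + ((1-R^(2*n))/(1+R^(2*n))) * ((R^n)⁻¹ * (R^n/s)) : ℝ) : ℂ) * (z^n)⁻¹ := by
      rw [eA, fA, if_pos habs, hneg, hRneg, zpow_neg]
      push_cast
      ring_nf
      simp only [inv_inv]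
      ring
    rw [L, Rr]
    congr 1
    norm_cast
    field_simp
    linear_combination 2*h2n
  · have hne1 : ‖z‖ ≠ 1 := by rw [habs]; exact hR1.ne
    have hc : conj z = (R:ℂ)^2 * z⁻¹ := by
      have hR2 : ((R:ℂ)^2)⁻¹ ≠ 0 := by
        simp [hR0.ne']
      have h1 : z⁻¹ = conj z * ((R:ℂ)^2)⁻¹ := by
        rw [Complex.inv_def, Complex.normSq_eq_norm_sq, habs]
        push_cast
        ring
      rw [h1]
      have : ((R:ℂ)^2) ≠ 0 := by
        simp [hR0.ne']
      rw [mul_left_comm, mul_inv_cancel₀ this, mul_one]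
    have L : conj (eA R n z) = ((R^(2*n)/s : ℝ) : ℂ) * (z^n)⁻¹ := by
      rw [eA, map_div₀, map_zpow₀, hc, Complex.conj_ofReal, mul_zpow, inv_zpow,
        ← zpow_natCast ((R:ℂ)) 2, ← zpow_mul]
      push_cast
      ring
    have Rr : ((2*R^n/(1+R^(2*n)) : ℝ) : ℂ) * eA R (-n) z
        + (((1-R^(2*n))/(1+R^(2*n)) : ℝ) : ℂ) * fA R (-n) z
        = (((2*R^n/(1+R^(2*n))) * (R^n/s)
            + ((1-R^(2*n))/(1+R^(2*n))) * ((-1) / ((R^n)⁻¹ * (s/R^n))) : ℝ) : ℂ) * (z^n)⁻¹ := by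
      rw [eA, fA, if_neg hne1, hneg, hRneg, zpow_neg]
      push_cast
      ring_nf
      simp only [inv_inv]
      ring
    rw [L, Rr]
    congr 1
    norm_cast
    field_simp
    push_cast
    linear_combination (1+R^(2*n))*h2n
end

section
/- Let $\phi \in L^1([0,1], r\,dr)$ and define its Mellin transform $\widehat\phi(z) = \int_0^1 \phi(r) r^{z-1}\,dr$ for $\mathrm{Re}\,z \geq 2$. If there exist integers $n_0$ and $p \geq 1$ such that $\widehat\phi(n_0 + pk) = 0$ for all $k \in \mathbb{N}$ (with $n_0 + pk \geq 2$), then $\phi = 0$ almost everywhere. -/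
open MeasureTheory
open scoped ComplexConjugate

theorem aux_moment (F : ℝ → ℂ)
    (hFI : Integrable F (volume.restrict (Set.Ioc (0:ℝ) 1)))
    (q : ℕ) (hq : q ≠ 0)
    (hmom : ∀ k : ℕ, ∫ r in Set.Ioc (0:ℝ) 1, (((r ^ q) ^ k : ℝ) : ℂ) * F r = 0) :
    ∀ᵐ r ∂(volume.restrict (Set.Ioc (0:ℝ) 1)), F r = 0 := by
  set μ := volume.restrict (Set.Ioc (0:ℝ) 1) with hμ
  have hInt : ∀ g : ℝ → ℝ, Continuous g → Integrable (fun r => ((g r : ℝ) : ℂ) * F r) μ := by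
    intro g hg
    obtain ⟨C, hC⟩ := (isCompact_Icc (a := (0:ℝ)) (b := 1)).exists_bound_of_continuousOn
      hg.continuousOn
    refine (hFI.norm.const_mul C).mono' ?_ ?_
    · exact ((Complex.continuous_ofReal.comp hg).aestronglyMeasurable).mul
        hFI.aestronglyMeasurable
    · rw [hμ]
      refine (ae_restrict_mem measurableSet_Ioc).mono fun r hr => ?_
      have h2 : |g r| ≤ C := by
        have := hC r ⟨le_of_lt hr.1, hr.2⟩; rwa [Real.norm_eq_abs] at this
      rw [norm_mul, Complex.norm_real, Real.norm_eq_abs]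
      exact mul_le_mul_of_nonneg_right h2 (norm_nonneg _)
  have hpoly : ∀ Q : Polynomial ℝ, ∫ r, ((Q.eval (r ^ q) : ℝ) : ℂ) * F r ∂μ = 0 := by
    intro Q
    induction Q using Polynomial.induction_on' with
    | add P R hP hR =>
      have hiP := hInt (fun r => P.eval (r ^ q)) (P.continuous.comp (continuous_pow q))
      have hiR := hInt (fun r => R.eval (r ^ q)) (R.continuous.comp (continuous_pow q))
      have heq : (fun r : ℝ => (((P + R).eval (r ^ q) : ℝ) : ℂ) * F r)
          = fun r => ((P.eval (r ^ q) : ℝ) : ℂ) * F r + ((R.eval (r ^ q) : ℝ) : ℂ) * F r := by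
        funext r; push_cast [Polynomial.eval_add]; ring
      rw [heq, integral_add hiP hiR, hP, hR, add_zero]
    | monomial n c =>
      have heq : (fun r : ℝ => (((Polynomial.monomial n c).eval (r ^ q) : ℝ) : ℂ) * F r)
          = fun r => (c : ℂ) * ((((r ^ q) ^ n : ℝ) : ℂ) * F r) := by
        funext r; push_cast [Polynomial.eval_monomial]; ring
      rw [heq, integral_const_mul]
      have := hmom n
      rw [this, mul_zero]
  have hcont : ∀ g : ℝ → ℝ, Continuous g → ∫ r, ((g r : ℝ) : ℂ) * F r ∂μ = 0 := by
    intro g hg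
    set C := ∫ r, ‖F r‖ ∂μ with hCdef
    have hC0 : 0 ≤ C := integral_nonneg fun r => norm_nonneg _
    have key : ∀ ε : ℝ, 0 < ε → ‖∫ r, ((g r : ℝ) : ℂ) * F r ∂μ‖ ≤ ε * C := by
      intro ε hε
      haveI : CompactSpace (Set.Icc (0:ℝ) 1) := isCompact_iff_compactSpace.mp isCompact_Icc
      set m : C(Set.Icc (0:ℝ) 1, ℝ) :=
        ⟨fun x => (x : ℝ) ^ q, (continuous_pow q).comp continuous_subtype_val⟩ with hm
      have hsep : (Algebra.adjoin ℝ {m}).SeparatesPoints := by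
        intro x y hxy
        refine ⟨m, ⟨m, Algebra.subset_adjoin rfl, rfl⟩, ?_⟩
        simp only [hm, ContinuousMap.coe_mk]
        intro h
        exact hxy (Subtype.ext ((pow_left_strictMonoOn₀ hq).injOn x.2.1 y.2.1 h))
      obtain ⟨b, hb⟩ := ContinuousMap.exists_mem_subalgebra_near_continuous_of_separatesPoints
        (Algebra.adjoin ℝ {m}) hsep (fun x : Set.Icc (0:ℝ) 1 => g x)
        (hg.comp continuous_subtype_val) ε hε
      obtain ⟨bf, hbmem⟩ := b
      rw [Algebra.adjoin_singleton_eq_range_aeval] at hbmem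
      obtain ⟨Q, rfl⟩ := hbmem
      have hQpt : ∀ r : ℝ, r ∈ Set.Ioc (0:ℝ) 1 → |g r - Q.eval (r ^ q)| < ε := by
        intro r hr
        have h3 := hb ⟨r, ⟨hr.1.le, hr.2⟩⟩
        simp only [AlgHom.toRingHom_eq_coe, RingHom.coe_coe,
          Polynomial.aeval_continuousMap_apply, hm, ContinuousMap.coe_mk,
          Real.norm_eq_abs] at h3
        rw [abs_sub_comm] at h3
        exact h3
      have h1 : ∫ r, ((g r : ℝ) : ℂ) * F r ∂μ
          = ∫ r, (((g r : ℝ) : ℂ) * F r - ((Q.eval (r ^ q) : ℝ) : ℂ) * F r) ∂μ := by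
        rw [integral_sub (hInt g hg) (hInt (fun r => Q.eval (r ^ q)) (Q.continuous.comp (continuous_pow q))),
          hpoly Q, sub_zero]
      rw [h1]
      have h2 : ‖∫ r, (((g r : ℝ) : ℂ) * F r - ((Q.eval (r ^ q) : ℝ) : ℂ) * F r) ∂μ‖
          ≤ ∫ r, ε * ‖F r‖ ∂μ := by
        refine norm_integral_le_of_norm_le (hFI.norm.const_mul ε) ?_
        rw [hμ]
        refine (ae_restrict_mem measurableSet_Ioc).mono fun r hr => ?_
        have heq : ((g r : ℝ) : ℂ) * F r - ((Q.eval (r ^ q) : ℝ) : ℂ) * F r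
            = (((g r - Q.eval (r ^ q) : ℝ)) : ℂ) * F r := by push_cast; ring
        rw [heq, norm_mul, Complex.norm_real, Real.norm_eq_abs]
        exact mul_le_mul_of_nonneg_right (le_of_lt (hQpt r hr)) (norm_nonneg _)
      calc ‖∫ r, (((g r : ℝ) : ℂ) * F r - ((Q.eval (r ^ q) : ℝ) : ℂ) * F r) ∂μ‖
          ≤ ∫ r, ε * ‖F r‖ ∂μ := h2
        _ = ε * C := by rw [integral_const_mul]
    have hn : ‖∫ r, ((g r : ℝ) : ℂ) * F r ∂μ‖ ≤ 0 := by
      refine le_of_forall_pos_le_add fun ε' hε' => ?_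
      have h1 := key (ε' / (C + 1)) (by positivity)
      calc ‖∫ r, ((g r : ℝ) : ℂ) * F r ∂μ‖ ≤ ε' / (C + 1) * C := h1
        _ ≤ ε' := by
            rw [div_mul_eq_mul_div, div_le_iff₀ (by positivity)]
            nlinarith
        _ = 0 + ε' := (zero_add ε').symm
    exact norm_le_zero_iff.mp hn
  have := ae_eq_zero_of_integral_contDiff_smul_eq_zero (μ := μ) hFI.locallyIntegrable ?_
  · exact this
  · intro g hg hgsupp
    have h := hcont g hg.continuous
    simpa only [Complex.real_smul] using h

theorem stmt15 (phi : ℝ → ℂ) (hm : Measurable phi)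
    (hint : IntegrableOn (fun r => ‖phi r‖ * r) (Set.Ioc (0:ℝ) 1) volume)
    (n0 p : ℤ) (hp : 1 ≤ p)
    (h0 : ∀ k : ℕ, 2 ≤ n0 + p * (k:ℤ) →
      (∫ r in (0:ℝ)..1, phi r * ((r ^ ((n0 + p * (k:ℤ)) - 1) : ℝ) : ℂ)) = 0) :
    ∀ᵐ r ∂(volume.restrict (Set.Ioc (0:ℝ) 1)), phi r = 0 := by
  set q : ℕ := p.toNat with hqdef
  have hq' : (q : ℤ) = p := Int.toNat_of_nonneg (by linarith)
  have hq : q ≠ 0 := by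
    intro h; rw [h] at hq'; simp at hq'; omega
  set k0 : ℕ := (2 - n0).toNat with hk0def
  have hk0 : (2 - n0 : ℤ) ≤ (k0 : ℤ) := Int.self_le_toNat _
  have hpk0 : (k0 : ℤ) ≤ p * k0 := by nlinarith [Int.natCast_nonneg k0]
  have h2k0 : 2 ≤ n0 + p * (k0 : ℤ) := by linarith
  set a : ℕ := (n0 + p * k0 - 2).toNat with hadef
  have ha : (a : ℤ) = n0 + p * (k0 : ℤ) - 2 := Int.toNat_of_nonneg (by linarith)
  set F : ℝ → ℂ := fun r => phi r * ((r ^ (a + 1) : ℝ) : ℂ) with hF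
  have hFI : Integrable F (volume.restrict (Set.Ioc (0:ℝ) 1)) := by
    refine hint.mono' ?_ ?_
    · exact hm.aestronglyMeasurable.mul
        ((Complex.continuous_ofReal.comp (continuous_pow (a + 1))).aestronglyMeasurable)
    · refine (ae_restrict_mem measurableSet_Ioc).mono fun r hr => ?_
      rw [hF]
      simp only [norm_mul, Complex.norm_real, Real.norm_eq_abs]
      rw [abs_of_nonneg (pow_nonneg hr.1.le _)]
      have : r ^ (a + 1) ≤ r := by
        calc r ^ (a + 1) ≤ r ^ 1 := pow_le_pow_of_le_one hr.1.le hr.2 (by omega)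
          _ = r := pow_one r
      exact mul_le_mul_of_nonneg_left this (norm_nonneg _)
  have hmom : ∀ k : ℕ, ∫ r in Set.Ioc (0:ℝ) 1, (((r ^ q) ^ k : ℝ) : ℂ) * F r = 0 := by
    intro k
    have h2 : 2 ≤ n0 + p * ((k0 + k : ℕ) : ℤ) := by
      push_cast
      have : (0:ℤ) ≤ p * k := mul_nonneg (by linarith) (Int.natCast_nonneg _)
      have hexp : p * ((k0:ℤ) + (k:ℤ)) = p * k0 + p * k := by ring
      linarith [hexp ▸ le_refl (p * ((k0:ℤ) + (k:ℤ)))] 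
    have h3 := h0 (k0 + k) h2
    rw [intervalIntegral.integral_of_le zero_le_one] at h3
    have hexp : (n0 + p * ((k0 + k : ℕ) : ℤ) - 1) = ((a + 1 + q * k : ℕ) : ℤ) := by
      push_cast
      rw [ha, hq']
      ring
    have heq : ∀ r : ℝ, phi r * ((r ^ (n0 + p * ((k0 + k : ℕ) : ℤ) - 1) : ℝ) : ℂ)
        = (((r ^ q) ^ k : ℝ) : ℂ) * F r := by
      intro r
      rw [hexp, zpow_natCast, hF]
      push_cast
      ring
    rw [← integral_congr_ae (Filter.Eventually.of_forall fun r => (heq r))] at *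
    · exact h3
  have hF0 := aux_moment F hFI q hq hmom
  filter_upwards [hF0, ae_restrict_mem measurableSet_Ioc] with r h1 h2
  rw [hF] at h1
  simp only at h1
  rcases mul_eq_zero.mp h1 with h | h
  · exact h
  · exfalso
    have : (r : ℝ) ^ (a + 1) ≠ 0 := pow_ne_zero _ (ne_of_gt h2.1)
    exact this (by exact_mod_cast h)
end
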